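/- arXiv:0907.4241 — 3 statements merged into one kernel-verified Lean document; each statement's English description precedes it below -/
import Mathlib

section
/- With m_1, m_2 coprime and greater than one, a ≥ 2, b + c ≥ 2, gcd(a, b m_1 + c m_2) = 1, and S = ⟨a m_1, a m_2, b m_1 + c m_2⟩: a m_1 m_2 - a(b m_1 + c m_2) ∈ S if and only if (b = 0 and c ≤ m_1) or (c = 0 and b ≤ m_2). -/
/-!
Write an element of `S` as `x a m₁ + y a m₂ + z n` with `n = b m₁ + c m₂`. If it equals
`a m₁ m₂ - a n`, then `a ∣ z n`, so `a ∣ z` since `gcd(a, n) = 1`; writing `z = a t` and dividing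
by `a` gives `(x + (t+1) b) m₁ + (y + (t+1) c) m₂ = m₁ m₂`. As `m₁, m₂` are coprime, the only such
decompositions of `m₁ m₂` are `0 · m₁ + m₁ · m₂` and `m₂ · m₁ + 0 · m₂`, which force `b = 0, c ≤ m₁`
or `c = 0, b ≤ m₂`. Conversely `(m₁ - c) · a m₂`, resp. `(m₂ - b) · a m₁`, is the required element.
-/

theorem AddSubmonoid.mem_closure_triple {A : Type*} [AddCommMonoid A] (p q r s : A) :
    s ∈ closure ({p, q, r} : Set A) ↔ ∃ x y z : ℕ, x • p + y • q + z • r = s := by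
  rw [← Set.singleton_union, closure_union, mem_sup]
  simp_rw [mem_closure_singleton, mem_closure_pair, exists_exists_eq_and]
  constructor
  · rintro ⟨x, _, ⟨y, z, rfl⟩, rfl⟩
    exact ⟨x, y, z, add_assoc _ _ _⟩
  · rintro ⟨x, y, z, rfl⟩
    exact ⟨x, _, ⟨y, z, rfl⟩, (add_assoc _ _ _).symm⟩

theorem Nat.Coprime.eq_of_mul_add_mul_eq_mul {m₁ m₂ X Y : ℕ} (hcop : m₁.Coprime m₂)
    (hm₁ : 0 < m₁) (hm₂ : 0 < m₂) (h : X * m₁ + Y * m₂ = m₁ * m₂) :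
    (X = 0 ∧ Y = m₁) ∨ (X = m₂ ∧ Y = 0) := by
  have hdvd₁ : m₁ ∣ X * m₁ + Y * m₂ := h ▸ Dvd.intro m₂ rfl
  have hdvd₂ : m₂ ∣ X * m₁ + Y * m₂ := h ▸ Dvd.intro_left m₁ rfl
  obtain ⟨α, rfl⟩ : m₂ ∣ X :=
    hcop.symm.dvd_of_dvd_mul_right ((Nat.dvd_add_left (Dvd.intro_left Y rfl)).mp hdvd₂)
  obtain ⟨β, rfl⟩ : m₁ ∣ Y :=
    hcop.dvd_of_dvd_mul_right ((Nat.dvd_add_right (Dvd.intro_left _ rfl)).mp hdvd₁)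
  have hsum : (α + β) * (m₁ * m₂) = 1 * (m₁ * m₂) := by linarith
  have hαβ := Nat.eq_of_mul_eq_mul_right (by positivity) hsum
  rcases (by omega : α = 0 ∧ β = 1 ∨ α = 1 ∧ β = 0) with ⟨rfl, rfl⟩ | ⟨rfl, rfl⟩ <;> simp

theorem exists_mul_add_mul_eq_mul_of_coprime {m₁ m₂ a n x y z : ℕ} (ha : 0 < a)
    (hcop : a.Coprime n) (h : x * (a * m₁) + y * (a * m₂) + z * n + a * n = a * m₁ * m₂) :
    ∃ t, x * m₁ + y * m₂ + (t + 1) * n = m₁ * m₂ := by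
  have hsum : a ∣ x * (a * m₁) + y * (a * m₂) + z * n + a * n :=
    h ▸ Dvd.intro (m₁ * m₂) (by ring)
  have hzn : a ∣ z * n :=
    (Nat.dvd_add_right (Dvd.intro (x * m₁ + y * m₂) (by ring))).mp
      ((Nat.dvd_add_left (Dvd.intro n rfl)).mp hsum)
  obtain ⟨t, rfl⟩ := hcop.dvd_of_dvd_mul_right hzn
  exact ⟨t, Nat.eq_of_mul_eq_mul_left ha (by linarith)⟩

theorem stmt14_general (m₁ m₂ a b c : ℕ) (hm₁ : 1 < m₁) (hm₂ : 1 < m₂)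
    (hcopm : Nat.Coprime m₁ m₂) (ha : 2 ≤ a)
    (hcop : Nat.Coprime a (b * m₁ + c * m₂)) :
    (∃ s ∈ AddSubmonoid.closure ({a * m₁, a * m₂, b * m₁ + c * m₂} : Set ℕ),
        (s : ℤ) = (a : ℤ) * m₁ * m₂ - (a : ℤ) * ((b : ℤ) * m₁ + (c : ℤ) * m₂)) ↔
      ((b = 0 ∧ c ≤ m₁) ∨ (c = 0 ∧ b ≤ m₂)) := by
  simp only [AddSubmonoid.mem_closure_triple, smul_eq_mul]
  constructor
  · rintro ⟨_, ⟨x, y, z, rfl⟩, hs⟩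
    have hnat : x * (a * m₁) + y * (a * m₂) + z * (b * m₁ + c * m₂) + a * (b * m₁ + c * m₂)
        = a * m₁ * m₂ := by
      push_cast at hs
      linarith
    obtain ⟨t, ht⟩ := exists_mul_add_mul_eq_mul_of_coprime (by omega) hcop hnat
    have hdecomp : (x + (t + 1) * b) * m₁ + (y + (t + 1) * c) * m₂ = m₁ * m₂ := by linarith
    rw [add_one_mul, add_one_mul] at hdecomp
    rcases hcopm.eq_of_mul_add_mul_eq_mul (by omega) (by omega) hdecomp with ⟨hX, hY⟩ | ⟨hX, hY⟩
      <;> omega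
  · rintro (⟨rfl, hc⟩ | ⟨rfl, hb⟩)
    · refine ⟨_, ⟨0, m₁ - c, 0, rfl⟩, ?_⟩
      push_cast [Nat.cast_sub hc]
      ring
    · refine ⟨_, ⟨m₂ - b, 0, 0, rfl⟩, ?_⟩
      push_cast [Nat.cast_sub hb]
      ring

/-- With `m₁, m₂` coprime and `> 1`, `a ≥ 2`, `b + c ≥ 2`, `gcd(a, b m₁ + c m₂) = 1` and
`S = ⟨a m₁, a m₂, b m₁ + c m₂⟩`: `a m₁ m₂ - a(b m₁ + c m₂) ∈ S` iff
`(b = 0 and c ≤ m₁)` or `(c = 0 and b ≤ m₂)`. -/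
theorem stmt14 (m₁ m₂ a b c : ℕ) (hm₁ : 1 < m₁) (hm₂ : 1 < m₂)
    (hcopm : Nat.Coprime m₁ m₂) (ha : 2 ≤ a) (hbc : 2 ≤ b + c)
    (hcop : Nat.Coprime a (b * m₁ + c * m₂)) :
    (∃ s ∈ AddSubmonoid.closure ({a * m₁, a * m₂, b * m₁ + c * m₂} : Set ℕ),
        (s : ℤ) = (a : ℤ) * m₁ * m₂ - (a : ℤ) * ((b : ℤ) * m₁ + (c : ℤ) * m₂)) ↔
      ((b = 0 ∧ c ≤ m₁) ∨ (c = 0 ∧ b ≤ m₂)) :=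
  stmt14_general m₁ m₂ a b c hm₁ hm₂ hcopm ha hcop
end

section
/- Let a ≥ 3 be an integer. The numerical semigroup S = ⟨a, a+1, a+2⟩ is uniquely presented. -/
open Finset

variable {M : Type*} [AddCommMonoid M] {r : ℕ}

/-- The factorization homomorphism associated to the generating tuple `A`. -/
def phi (A : Fin r → M) (u : Fin r → ℕ) : M := ∑ i, u i • A i

/-- One step of the relation `R`: two factorizations of `a` with nonzero dot product. -/
def step (A : Fin r → M) (a : M) (u v : Fin r → ℕ) : Prop :=
  phi A u = a ∧ phi A v = a ∧ (∑ i, u i * v i) ≠ 0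

/-- The relation `R` on the fiber of `a`: connected by a chain of factorizations with
consecutive nonzero dot products. -/
def Rrel (A : Fin r → M) (a : M) : (Fin r → ℕ) → (Fin r → ℕ) → Prop :=
  Relation.ReflTransGen (step A a)

/-- `a` is a Betti element: its fiber has more than one `R`-class. -/
def IsBetti (A : Fin r → M) (a : M) : Prop :=
  ∃ u v : Fin r → ℕ, phi A u = a ∧ phi A v = a ∧ ¬ Rrel A a u v

/-- `a` is Betti-minimal: a Betti element minimal with respect to `b ≺ a ↔ a - b ∈ S`. -/
def BettiMinimal (A : Fin r → M) (a : M) : Prop :=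
  IsBetti A a ∧ ∀ b : M, IsBetti A b → (∃ c : M, a = b + c) → b = a

/-- `a` has a unique presentation: exactly two factorizations, with disjoint support. -/
def HasUniquePres (A : Fin r → M) (a : M) : Prop :=
  ∃ u v : Fin r → ℕ, u ≠ v ∧ {w : Fin r → ℕ | phi A w = a} = {u, v} ∧
    (∑ i, u i * v i) = 0

/-- The monoid generated by `A` is uniquely presented: every Betti element has exactly two
factorizations, with disjoint support. -/
def UniquelyPresented (A : Fin r → M) : Prop :=
  ∀ a : M, IsBetti A a → HasUniquePres A a

/-!
Write a factorization of `n` in `⟨a, a+1, a+2⟩` as `(x, y, z)`; its length `s = x + y + z`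
satisfies `n = s a + (y + 2z)`. Within one length, the trade `a + (a+2) = 2(a+1)` joins every
factorization to the unique one with `y < 2`, and each trade shares support with its source
except for `(0,2,0) ↔ (1,0,1)`, i.e. `n = 2a + 2`. Between consecutive lengths, the reduced
factorizations share support except for three values of `n` determined by the parity of `a`.
So every other `n` has a single `R`-class and is not Betti, while at the four exceptional values
the fiber consists of exactly two factorizations with disjoint support.
-/

section Rrel

variable {A : Fin r → M} {n : M} {u v : Fin r → ℕ}

theorem step_symm (h : step A n u v) : step A n v u := by
  obtain ⟨hu, hv, hdot⟩ := h
  exact ⟨hv, hu, by simpa only [mul_comm] using hdot⟩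

theorem Rrel.symm (h : Rrel A n u v) : Rrel A n v u :=
  have : Std.Symm (step A n) := ⟨fun _ _ => step_symm⟩
  Std.Symm.symm (r := Relation.ReflTransGen (step A n)) _ _ h

end Rrel

theorem exists_eq_vec3 (u : Fin 3 → ℕ) : ∃ x y z, u = ![x, y, z] :=
  ⟨u 0, u 1, u 2, by funext i; fin_cases i <;> rfl⟩

theorem phi_vec3 (a x y z : ℕ) :
    phi ![a, a + 1, a + 2] ![x, y, z] = (x + y + z) * a + (y + 2 * z) := by
  simp [phi, Fin.sum_univ_three]
  ring

theorem dot_vec3 (x y z x' y' z' : ℕ) :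
    ∑ i, ![x, y, z] i * ![x', y', z'] i = x * x' + y * y' + z * z' := by
  simp [Fin.sum_univ_three]

/-- The candidates for the Betti elements of `⟨a, a+1, a+2⟩`, coming from the relations
`2(a+1) = a + (a+2)` and, for `a = 2k`, `(k+1) a = k (a+2)`, resp. for `a = 2k+1`,
`(k+2) a = (a+1) + k (a+2)` and `(k+1)(a+2) = (k+1) a + (a+1)`. -/
def IsBettiCandidate (a n : ℕ) : Prop :=
  n = 2 * a + 2 ∨ (∃ k, a = 2 * k ∧ n = (k + 1) * a) ∨
    ∃ k, a = 2 * k + 1 ∧ (n = (k + 2) * a ∨ n = (k + 1) * (a + 2))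

section Fiber

variable {a n : ℕ}

theorem step_trade {x y z : ℕ} (hn : n ≠ 2 * a + 2)
    (h : phi ![a, a + 1, a + 2] ![x, y + 2, z] = n) :
    step ![a, a + 1, a + 2] n ![x, y + 2, z] ![x + 1, y, z + 1] := by
  refine ⟨h, ?_, ?_⟩
  · rw [← h, phi_vec3, phi_vec3]
    ring
  · rw [dot_vec3]
    intro hdot
    simp only [Nat.add_eq_zero_iff, mul_eq_zero] at hdot
    obtain ⟨rfl, rfl, rfl⟩ : x = 0 ∧ y = 0 ∧ z = 0 := by omega
    exact hn (by rw [← h, phi_vec3])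

theorem exists_rrel_reduced (hn : n ≠ 2 * a + 2) (y : ℕ) : ∀ x z,
    phi ![a, a + 1, a + 2] ![x, y, z] = n → ∃ x' y' z', y' < 2 ∧ x' + y' + z' = x + y + z ∧
      phi ![a, a + 1, a + 2] ![x', y', z'] = n ∧
      Rrel ![a, a + 1, a + 2] n ![x, y, z] ![x', y', z'] := by
  induction y using Nat.strong_induction_on with
  | _ y ih =>
    intro x z h
    rcases Nat.lt_or_ge y 2 with hy | hy
    · exact ⟨x, y, z, hy, rfl, h, .refl⟩
    · obtain ⟨y, rfl⟩ := le_iff_exists_add'.1 hy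
      have htrade := step_trade hn h
      obtain ⟨x', y', z', hy', hlen, h', hR⟩ := ih y (by omega) (x + 1) (z + 1) htrade.2.1
      exact ⟨x', y', z', hy', by omega, h', .head htrade hR⟩

theorem reduced_eq_of_phi_eq {x y z x' y' z' : ℕ} (hy : y < 2) (hy' : y' < 2)
    (hlen : x' + y' + z' = x + y + z)
    (h : phi ![a, a + 1, a + 2] ![x, y, z] = phi ![a, a + 1, a + 2] ![x', y', z']) :
    ![x, y, z] = ![x', y', z'] := by
  rw [phi_vec3, phi_vec3, hlen, Nat.add_left_cancel_iff] at h
  have hyz : y = y' ∧ z = z' := by omega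
  obtain ⟨rfl, rfl⟩ := hyz
  obtain rfl : x = x' := by omega
  rfl

theorem exists_reduced_length_succ {x y z x' y' z' : ℕ}
    (h : phi ![a, a + 1, a + 2] ![x, y, z] = n) (h' : phi ![a, a + 1, a + 2] ![x', y', z'] = n)
    (hlt : x + y + z < x' + y' + z') :
    ∃ p q r, q < 2 ∧ p + q + r = x + y + z + 1 ∧ phi ![a, a + 1, a + 2] ![p, q, r] = n := by
  rw [phi_vec3] at h h'
  have hs : (x + y + z + 1) * a ≤ (x' + y' + z') * a := Nat.mul_le_mul_right a hlt
  rw [add_mul, one_mul] at hs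
  obtain ⟨c, hc⟩ : ∃ c, y + 2 * z = a + c := ⟨y + 2 * z - a, by omega⟩
  refine ⟨x + y + z + 1 - (c % 2 + c / 2), c % 2, c / 2, Nat.mod_lt _ two_pos, by omega, ?_⟩
  rw [phi_vec3, show x + y + z + 1 - (c % 2 + c / 2) + c % 2 + c / 2 = x + y + z + 1 by omega,
    add_mul, one_mul]
  omega

theorem isBettiCandidate_of_dot_eq_zero (ha : 2 ≤ a) {x y z x' y' z' : ℕ}
    (hy : y < 2) (hy' : y' < 2)
    (hlen : x' + y' + z' = x + y + z + 1)
    (h : phi ![a, a + 1, a + 2] ![x, y, z] = n) (h' : phi ![a, a + 1, a + 2] ![x', y', z'] = n)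
    (hdot : x * x' + y * y' + z * z' = 0) : IsBettiCandidate a n := by
  rw [phi_vec3] at h h'
  rw [hlen, add_mul, one_mul] at h'
  simp only [Nat.add_eq_zero_iff, mul_eq_zero] at hdot
  -- `y + 2z = a + y' + 2z'` with `y < 2 ≤ a` forces `z ≠ 0`, hence `z' = 0`, and then `x = 0`.
  have hc : y + 2 * z = a + (y' + 2 * z') := by omega
  obtain ⟨k, rfl | rfl⟩ := Nat.even_or_odd' a
  · obtain ⟨rfl, rfl, rfl⟩ : x = 0 ∧ y = 0 ∧ k = z := by omega
    exact .inr (.inl ⟨_, rfl, by rw [← h]; ring⟩)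
  · refine .inr (.inr ⟨k, rfl, ?_⟩)
    obtain hy' | hy' : y' = 0 ∨ y' = 1 := by omega
    · obtain ⟨rfl, rfl, rfl⟩ : x = 0 ∧ y = 1 ∧ z = k := by omega
      exact .inl (by rw [← h]; ring)
    · obtain ⟨rfl, rfl, rfl⟩ : x = 0 ∧ y = 0 ∧ z = k + 1 := by omega
      exact .inr (by rw [← h]; ring)

theorem rrel_of_not_isBettiCandidate (ha : 2 ≤ a) (hn : ¬ IsBettiCandidate a n)
    {u v : Fin 3 → ℕ} (hu : phi ![a, a + 1, a + 2] u = n) (hv : phi ![a, a + 1, a + 2] v = n) :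
    Rrel ![a, a + 1, a + 2] n u v := by
  have hn₂ : n ≠ 2 * a + 2 := fun h => hn (.inl h)
  suffices key : ∀ d x y z x' y' z', phi ![a, a + 1, a + 2] ![x, y, z] = n →
      phi ![a, a + 1, a + 2] ![x', y', z'] = n → x + y + z + d = x' + y' + z' →
      Rrel ![a, a + 1, a + 2] n ![x, y, z] ![x', y', z'] by
    obtain ⟨x, y, z, rfl⟩ := exists_eq_vec3 u
    obtain ⟨x', y', z', rfl⟩ := exists_eq_vec3 v
    rcases le_total (x + y + z) (x' + y' + z') with hle | hle
    · exact key _ _ _ _ _ _ _ hu hv (Nat.add_sub_of_le hle)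
    · exact (key _ _ _ _ _ _ _ hv hu (Nat.add_sub_of_le hle)).symm
  intro d
  induction d with
  | zero =>
    intro x y z x' y' z' hu hv hlen
    obtain ⟨x₁, y₁, z₁, hy₁, hlen₁, hu₁, hR⟩ := exists_rrel_reduced hn₂ y x z hu
    obtain ⟨x₂, y₂, z₂, hy₂, hlen₂, hv₂, hR'⟩ :=
      exists_rrel_reduced hn₂ y' x' z' hv
    rw [reduced_eq_of_phi_eq hy₁ hy₂ (by omega) (hu₁.trans hv₂.symm)] at hR
    exact hR.trans hR'.symm
  | succ d ih =>
    intro x y z x' y' z' hu hv hlen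
    obtain ⟨x₁, y₁, z₁, hy₁, hlen₁, hu₁, hR⟩ := exists_rrel_reduced hn₂ y x z hu
    obtain ⟨x₂, y₂, z₂, hy₂, hlen₂, hw⟩ := exists_reduced_length_succ hu hv (by omega)
    have hstep : step ![a, a + 1, a + 2] n ![x₁, y₁, z₁] ![x₂, y₂, z₂] := by
      refine ⟨hu₁, hw, fun hdot => hn ?_⟩
      rw [dot_vec3] at hdot
      exact isBettiCandidate_of_dot_eq_zero ha hy₁ hy₂ (by omega) hu₁ hw hdot
    exact (hR.tail hstep).trans (ih _ _ _ _ _ _ hw hv (by omega))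

theorem hasUniquePres_of_fiber_eq {x y z x' y' z' : ℕ} (hn : n ≠ 0)
    (hfiber : ∀ p q t, (p + q + t) * a + (q + 2 * t) = n ↔
      p = x ∧ q = y ∧ t = z ∨ p = x' ∧ q = y' ∧ t = z')
    (hdot : x * x' + y * y' + z * z' = 0) : HasUniquePres ![a, a + 1, a + 2] n := by
  refine ⟨![x, y, z], ![x', y', z'], ?_, ?_, by rw [dot_vec3]; exact hdot⟩
  · intro heq
    simp only [Matrix.vecCons_inj, and_true] at heq
    obtain ⟨rfl, rfl, rfl⟩ := heq
    simp only [Nat.add_eq_zero_iff, mul_self_eq_zero] at hdot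
    obtain ⟨⟨rfl, rfl⟩, rfl⟩ := hdot
    exact hn (by simpa using ((hfiber 0 0 0).2 (.inl ⟨rfl, rfl, rfl⟩)).symm)
  · ext w
    obtain ⟨p, q, t, rfl⟩ := exists_eq_vec3 w
    simp [phi_vec3, hfiber, Matrix.vecCons_inj]

theorem hasUniquePres_two_mul_add_two (ha : 3 ≤ a) :
    HasUniquePres ![a, a + 1, a + 2] (2 * a + 2) := by
  refine hasUniquePres_of_fiber_eq (x := 1) (y := 0) (z := 1) (x' := 0) (y' := 2) (z' := 0)
    (by omega) (fun p q t => ⟨fun h => ?_, ?_⟩) rfl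
  · have hs : p + q + t = 2 := by
      rcases lt_trichotomy (p + q + t) 2 with hs | hs | hs
      · nlinarith
      · exact hs
      · nlinarith
    rw [hs] at h
    omega
  · rintro (⟨rfl, rfl, rfl⟩ | ⟨rfl, rfl, rfl⟩) <;> ring

theorem hasUniquePres_even_succ_mul {k : ℕ} (hk : a = 2 * k) (ha : 0 < a) :
    HasUniquePres ![a, a + 1, a + 2] ((k + 1) * a) := by
  refine hasUniquePres_of_fiber_eq (x := k + 1) (y := 0) (z := 0) (x' := 0) (y' := 0) (z' := k)
    (by positivity) (fun p q t => ⟨fun h => ?_, ?_⟩) (by ring)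
  · have hs₁ : k ≤ p + q + t := by nlinarith
    have hs₂ : p + q + t ≤ k + 1 := by nlinarith
    obtain hs | hs : p + q + t = k ∨ p + q + t = k + 1 := by omega
    · rw [hs] at h
      have hc : q + 2 * t = a := by linarith
      omega
    · rw [hs] at h
      have hc : q + 2 * t = 0 := by linarith
      omega
  · rintro (⟨rfl, rfl, rfl⟩ | ⟨rfl, rfl, rfl⟩) <;> subst hk <;> ring

theorem hasUniquePres_odd_add_two_mul {k : ℕ} (hk : a = 2 * k + 1) :
    HasUniquePres ![a, a + 1, a + 2] ((k + 2) * a) := by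
  refine hasUniquePres_of_fiber_eq (x := k + 2) (y := 0) (z := 0) (x' := 0) (y' := 1) (z' := k)
    (by rw [hk]; positivity) (fun p q t => ⟨fun h => ?_, ?_⟩) (by ring)
  · have hs₁ : k + 1 ≤ p + q + t := by nlinarith
    have hs₂ : p + q + t ≤ k + 2 := by nlinarith
    obtain hs | hs : p + q + t = k + 1 ∨ p + q + t = k + 2 := by omega
    · rw [hs] at h
      have hc : q + 2 * t = a := by linarith
      omega
    · rw [hs] at h
      have hc : q + 2 * t = 0 := by linarith
      omega
  · rintro (⟨rfl, rfl, rfl⟩ | ⟨rfl, rfl, rfl⟩) <;> subst hk <;> ring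

theorem hasUniquePres_odd_succ_mul_add_two {k : ℕ} (hk : a = 2 * k + 1) (ha : 3 ≤ a) :
    HasUniquePres ![a, a + 1, a + 2] ((k + 1) * (a + 2)) := by
  refine hasUniquePres_of_fiber_eq (x := 0) (y := 0) (z := k + 1) (x' := k + 1) (y' := 1) (z' := 0)
    (by positivity) (fun p q t => ⟨fun h => ?_, ?_⟩) (by ring)
  · have hs₁ : k + 1 ≤ p + q + t := by nlinarith
    have hs₂ : p + q + t ≤ k + 2 := by nlinarith
    obtain hs | hs : p + q + t = k + 1 ∨ p + q + t = k + 2 := by omega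
    · rw [hs] at h
      have hc : q + 2 * t = 2 * k + 2 := by subst hk; linarith
      omega
    · rw [hs] at h
      have hc : q + 2 * t + a = 2 * k + 2 := by linarith
      omega
  · rintro (⟨rfl, rfl, rfl⟩ | ⟨rfl, rfl, rfl⟩) <;> subst hk <;> ring

end Fiber

/-- For `a ≥ 3`, the numerical semigroup `⟨a, a+1, a+2⟩` is uniquely presented. -/
theorem stmt17 (a : ℕ) (ha : 3 ≤ a) :
    UniquelyPresented ![a, a + 1, a + 2] := by
  intro n hbetti
  by_cases hc : IsBettiCandidate a n
  · obtain rfl | ⟨k, hk, rfl⟩ | ⟨k, hk, rfl | rfl⟩ := hc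
    · exact hasUniquePres_two_mul_add_two ha
    · exact hasUniquePres_even_succ_mul hk (by omega)
    · exact hasUniquePres_odd_add_two_mul hk
    · exact hasUniquePres_odd_succ_mul_add_two hk ha
  · obtain ⟨u, v, hu, hv, hR⟩ := hbetti
    exact absurd (rrel_of_not_isBettiCandidate (by omega) hc hu hv) hR
end

section
/- Let a > x ≥ 4 be integers with a ≥ 2 and S = ⟨a, a+1, ..., a+x⟩. Then the element 2(a+2) is a Betti element of S with at least three factorizations, so S is not uniquely presented. -/
/-!
Since `x < a`, a factorization of `2(a+2)` has exactly two parts, whose indices add up to 4: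
the length `ℓ` satisfies `ℓ a ≤ 2(a+2) < 3a` and `2(a+2) ≤ ℓ (a+x) < 2(a+2)` when `ℓ ≤ 1`.
So the factorizations are `e₀ + e₄`, `e₁ + e₃` and `2e₂`, pairwise with disjoint supports; in
particular `2e₂` is alone in its `R`-class, making `2(a+2)` a Betti element with three
factorizations, which a unique presentation does not allow.
-/

open Finset

variable {M : Type*} [AddCommMonoid M] {r : ℕ}

lemma phi_add (A : Fin r → M) (u v : Fin r → ℕ) : phi A (u + v) = phi A u + phi A v := by
  simp [phi, add_smul, sum_add_distrib]

lemma phi_single (A : Fin r → M) (i : Fin r) (n : ℕ) : phi A (Pi.single i n) = n • A i := by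
  simp [phi, Pi.single_apply, ite_smul]

lemma eq_of_rrel_of_isolated {A : Fin r → M} {b : M} {u z : Fin r → ℕ}
    (hiso : ∀ w, phi A w = b → ∑ i, u i * w i ≠ 0 → w = u) (h : Rrel A b u z) : z = u := by
  induction h with
  | refl => rfl
  | tail _ hstep ih =>
    obtain ⟨-, hw, hdot⟩ := hstep
    subst ih
    exact hiso _ hw hdot

lemma isBetti_of_isolated {A : Fin r → M} {b : M} {u v : Fin r → ℕ} (hu : phi A u = b)
    (hv : phi A v = b) (hne : v ≠ u) (hiso : ∀ w, phi A w = b → ∑ i, u i * w i ≠ 0 → w = u) :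
    IsBetti A b :=
  ⟨u, v, hu, hv, fun h => hne (eq_of_rrel_of_isolated hiso h)⟩

lemma not_uniquelyPresented_of_three_le_encard {A : Fin r → M} {b : M} (hb : IsBetti A b)
    (h3 : 3 ≤ {w | phi A w = b}.encard) : ¬ UniquelyPresented A := by
  intro hup
  obtain ⟨u, v, huv, hfiber, -⟩ := hup b hb
  rw [hfiber, Set.encard_pair huv] at h3
  exact absurd h3 (by norm_num)

lemma exists_eq_single_of_sum_eq_one {ι : Type*} [Fintype ι] [DecidableEq ι] {w : ι → ℕ}
    (h : ∑ i, w i = 1) : ∃ j, w = Pi.single j 1 := by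
  obtain ⟨j, hj⟩ := (Finsupp.sum_eq_one_iff (Finsupp.equivFunOnFinite.symm w)).mp
    (by rwa [Finsupp.sum_fintype _ _ (fun _ => rfl)])
  exact ⟨j, by simpa using congrArg Finsupp.equivFunOnFinite hj⟩

lemma eq_single_two_of_sum_eq_two {ι : Type*} [Fintype ι] [DecidableEq ι] {f : ι → ℕ}
    (hf : Function.Injective f) {w : ι → ℕ} {j : ι} (hj : w j ≠ 0) (hlen : ∑ i, w i = 2)
    (hwt : ∑ i, w i * f i = 2 * f j) : w = Pi.single j 2 := by
  set w' := w - Pi.single j 1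
  have hw : w = w' + Pi.single j 1 := by
    funext i; by_cases hi : i = j
    · subst hi; simp only [Pi.add_apply, Pi.sub_apply, Pi.single_eq_same, w']; omega
    · simp [w', hi]
  obtain ⟨k, hk⟩ : ∃ k, w' = Pi.single k 1 :=
    exists_eq_single_of_sum_eq_one (by simpa [hw, sum_add_distrib] using hlen)
  have hkj : k = j :=
    hf (by simpa [hw, hk, add_mul, sum_add_distrib, two_mul, Pi.single_apply] using hwt)
  rw [hw, hk, hkj]
  funext i; by_cases hi : i = j <;> simp [hi]

section Interval

variable {a x : ℕ}

lemma phi_interval (w : Fin (x + 1) → ℕ) :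
    phi (fun i : Fin (x + 1) => a + (i : ℕ)) w = (∑ i, w i) * a + ∑ i, w i * i := by
  simp only [phi, smul_eq_mul, sum_mul, ← sum_add_distrib, mul_add]

lemma sum_mul_val_le (w : Fin (x + 1) → ℕ) : ∑ i, w i * (i : ℕ) ≤ (∑ i, w i) * x :=
  sum_mul (univ : Finset (Fin (x + 1))) w x ▸
    sum_le_sum fun i _ => Nat.mul_le_mul_left _ (Nat.lt_succ_iff.mp i.isLt)

lemma length_weight_of_phi_interval_eq (ha : 4 < a) (hxa : x < a) {w : Fin (x + 1) → ℕ}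
    (hw : phi (fun i : Fin (x + 1) => a + (i : ℕ)) w = 2 * (a + 2)) :
    ∑ i, w i = 2 ∧ ∑ i, w i * (i : ℕ) = 4 := by
  rw [phi_interval] at hw
  have hle := sum_mul_val_le w
  have hlen : ∑ i, w i ≤ 2 := by
    by_contra! h
    have := Nat.mul_le_mul_right a (Nat.succ_le_of_lt h)
    omega
  interval_cases h : ∑ i, w i <;> omega

end Interval

/-- For integers `a > x ≥ 4`, in `S = ⟨a, a+1, …, a+x⟩` the element `2(a+2)` is a Betti
element with at least three factorizations, so `S` is not uniquely presented. -/
theorem stmt18 (a x : ℕ) (hx : 4 ≤ x) (hxa : x < a) :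
    IsBetti (fun i : Fin (x + 1) => a + (i : ℕ)) (2 * (a + 2)) ∧
    3 ≤ {w : Fin (x + 1) → ℕ |
        phi (fun i : Fin (x + 1) => a + (i : ℕ)) w = 2 * (a + 2)}.encard ∧
    ¬ UniquelyPresented (fun i : Fin (x + 1) => a + (i : ℕ)) := by
  set A : Fin (x + 1) → ℕ := fun i => a + (i : ℕ)
  let i₀ : Fin (x + 1) := ⟨0, by omega⟩
  let i₁ : Fin (x + 1) := ⟨1, by omega⟩
  let i₂ : Fin (x + 1) := ⟨2, by omega⟩
  let i₃ : Fin (x + 1) := ⟨3, by omega⟩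
  let i₄ : Fin (x + 1) := ⟨4, by omega⟩
  set u : Fin (x + 1) → ℕ := Pi.single i₀ 1 + Pi.single i₄ 1
  set v : Fin (x + 1) → ℕ := Pi.single i₁ 1 + Pi.single i₃ 1
  set t : Fin (x + 1) → ℕ := Pi.single i₂ 2
  have hu : phi A u = 2 * (a + 2) := by
    simp only [u, phi_add, phi_single, smul_eq_mul, A, i₀, i₄]; ring
  have hv : phi A v = 2 * (a + 2) := by
    simp only [v, phi_add, phi_single, smul_eq_mul, A, i₁, i₃]; ring
  have ht : phi A t = 2 * (a + 2) := by simp [t, phi_single, A, i₂]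
  have huv : u ≠ v := fun h => by simpa [u, v, i₀, i₁, i₃, i₄] using congrFun h i₀
  have hut : u ≠ t := fun h => by simpa [u, t, i₀, i₂, i₄] using congrFun h i₀
  have hvt : v ≠ t := fun h => by simpa [v, t, i₁, i₂, i₃] using congrFun h i₁
  have hiso : ∀ w, phi A w = 2 * (a + 2) → ∑ i, t i * w i ≠ 0 → w = t := by
    intro w hw hdot
    obtain ⟨hlen, hwt⟩ := length_weight_of_phi_interval_eq (by omega) hxa hw
    exact eq_single_two_of_sum_eq_two Fin.val_injective (by simpa [t, Pi.single_apply] using hdot)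
      hlen hwt
  have hbetti : IsBetti A (2 * (a + 2)) := isBetti_of_isolated ht hu hut hiso
  have h3 : 3 ≤ {w | phi A w = 2 * (a + 2)}.encard :=
    calc (3 : ℕ∞) = ({u, v, t} : Set _).encard :=
          (Set.encard_eq_three.mpr ⟨u, v, t, huv, hut, hvt, rfl⟩).symm
      _ ≤ _ := Set.encard_le_encard (by rintro w (rfl | rfl | rfl) <;> assumption)
  exact ⟨hbetti, h3, not_uniquelyPresented_of_three_le_encard hbetti h3⟩
end
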